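/- Let (λ₁, λ₂) be an interlacing pair of type D_n weights with R(λ₁,λ₂) nonempty. Then there exists β* ∈ R(λ₁,λ₂) such that for every β ∈ R(λ₁,λ₂), the element β − β* is either zero, a positive root, or a sum of two positive roots of the D_n root system. -/

import Mathlib

/-- The value `λ(h_a) + ⋯ + λ(h_b)` of a weight on a sum of consecutive simple coroots. -/
def hIcc (lam : ℕ → ℤ) (a b : ℕ) : ℤ := ∑ s ∈ Finset.Icc a b, lam s

/-- Pairing of a weight with the coroot of the type-A root `α_{i,j}` in type `D_n`
(`α_{i,n} = α_i + ⋯ + α_{n-2} + α_n`); zero if `i > j`. -/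
def hA (n : ℕ) (lam : ℕ → ℤ) (i j : ℕ) : ℤ :=
  if j < i then 0 else if j = n then hIcc lam i (n - 2) + lam n else hIcc lam i j

/-- Pairing of a weight with the coroot of `β_{i,j}`:
`λ(h_{β_{i,j}}) = λ(h_{i,n-1}) + λ(h_{j,n-2}) + λ(h_n)`. -/
def hBeta (n : ℕ) (lam : ℕ → ℤ) (i j : ℕ) : ℤ :=
  hIcc lam i (n - 1) + hIcc lam j (n - 2) + lam n

/-- An interlacing pair of type `D_n` weights (weights are `ℕ → ℤ`, with values on
indices `1,…,n`; nonnegativity and the conditions (a)–(c) are built in). -/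
def Interlacing (n : ℕ) (l1 l2 : ℕ → ℤ) : Prop :=
  (∀ i, 1 ≤ i → i ≤ n → 0 ≤ l1 i ∧ 0 ≤ l2 i ∧ l1 i + l2 i ≤ 1) ∧
  (0 < l1 (n - 1) + l1 n → l2 (n - 1) + l2 n = 0) ∧
  (0 < l2 (n - 1) + l2 n → l1 (n - 1) + l1 n = 0) ∧
  (∀ i j, 1 ≤ i → i < j → j ≤ n → ¬(i = n - 1 ∧ j = n) →
    (l1 i = 1 → l1 j = 1 → ∃ s, i < s ∧ s < j ∧ l2 s = 1) ∧
    (l2 i = 1 → l2 j = 1 → ∃ s, i < s ∧ s < j ∧ l1 s = 1))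

/-- Coefficient function (on simple roots) of `α_{a,b} = α_a + ⋯ + α_b`; zero if `a > b`. -/
def alphaCoeff (a b k : ℕ) : ℤ := if a ≤ k ∧ k ≤ b then 1 else 0

/-- Coefficient function of `β_{i,j} = α_i + ⋯ + α_{j-1} + 2(α_j + ⋯ + α_{n-2}) + α_{n-1} + α_n`. -/
def betaCoeff (n i j k : ℕ) : ℤ :=
  (if i ≤ k ∧ k ≤ j - 1 then 1 else 0) + 2 * (if j ≤ k ∧ k ≤ n - 2 then 1 else 0) +
    (if k = n - 1 ∨ k = n then 1 else 0)

/-- Coefficient function of the type-A positive root `α_{i,j}` of `D_n`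
(`α_{i,n} = α_i + ⋯ + α_{n-2} + α_n`). -/
def alphaACoeff (n i j : ℕ) : ℕ → ℤ := fun k =>
  if j = n then (if (i ≤ k ∧ k ≤ n - 2) ∨ k = n then 1 else 0)
  else (if i ≤ k ∧ k ≤ j then 1 else 0)

/-- A coefficient function is a positive root of `D_n`. -/
def IsPosRootD (n : ℕ) (f : ℕ → ℤ) : Prop :=
  (∃ i j, 1 ≤ i ∧ i ≤ j ∧ j ≤ n ∧ ∀ k, f k = alphaACoeff n i j k) ∨
  (∃ i j, 1 ≤ i ∧ i < j ∧ j ≤ n - 1 ∧ ∀ k, f k = betaCoeff n i j k)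


/-!
Write `d = λ₁ - λ₂`. The interlacing conditions say that along the chain `α_1, …, α_{n-1}` and
along the chain `α_1, …, α_{n-2}, α_n` the nonzero values of `d` alternate in sign, so every
sum of `d` over a segment of either chain lies in `[-1, 1]`. Hence
`λ₁(h_{β_{i,j}}) - λ₂(h_{β_{i,j}}) = U i + V j` with `U i`, `V j` segment sums ending at `n - 1`
and at `n` respectively, and `β_{i,j} ∈ R(λ₁,λ₂)` means `U i = V j = ±1`. Since `U i - U i'` is
again a segment sum, the sign is the same for all of `R`, so `R` is closed under the
componentwise maximum of `(i, j)`. Its greatest element `(i₀, j₀)` is `β*`: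
for `(i, j) ∈ R`, `β_{i,j} - β_{i₀,j₀} = α_{i,i₀-1} + α_{j,j₀-1}`.
-/

open Finset

def IsInterlacingOn (l1 l2 : ℕ → ℤ) (a b : ℕ) : Prop :=
  (∀ s, a ≤ s → s < b → 0 ≤ l1 s ∧ 0 ≤ l2 s ∧ l1 s + l2 s ≤ 1) ∧
  ∀ s t, a ≤ s → s < t → t < b →
    (l1 s = 1 → l1 t = 1 → ∃ u, s < u ∧ u < t ∧ l2 u = 1) ∧
    (l2 s = 1 → l2 t = 1 → ∃ u, s < u ∧ u < t ∧ l1 u = 1)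

namespace IsInterlacingOn

variable {l1 l2 : ℕ → ℤ} {a b : ℕ}

theorem symm (h : IsInterlacingOn l1 l2 a b) : IsInterlacingOn l2 l1 a b :=
  ⟨fun s hs hsb => by obtain ⟨h1, h2, h12⟩ := h.1 s hs hsb; exact ⟨h2, h1, by omega⟩,
    fun s t hs hst htb => (h.2 s t hs hst htb).symm⟩

theorem mono (h : IsInterlacingOn l1 l2 a b) {a' b' : ℕ} (ha : a ≤ a') (hb : b' ≤ b) :
    IsInterlacingOn l1 l2 a' b' :=
  ⟨fun s hs hsb => h.1 s (by omega) (by omega),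
    fun s t hs hst htb => h.2 s t (by omega) hst (by omega)⟩

/-- The second conjunct is the induction invariant: a sum equal to `1` ends with an entry
`l1 t = 1` after which `l2` vanishes. -/
theorem sum_sub_le_one' (h : IsInterlacingOn l1 l2 a b) :
    ∑ s ∈ Ico a b, (l1 s - l2 s) ≤ 1 ∧
      (∑ s ∈ Ico a b, (l1 s - l2 s) = 1 →
        ∃ t, a ≤ t ∧ t < b ∧ l1 t = 1 ∧ ∀ u, t < u → u < b → l2 u = 0) := by
  induction b with
  | zero => simp
  | succ b ih =>
    rcases lt_or_ge b a with hba | hab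
    · simp [Ico_eq_empty_of_le (show b + 1 ≤ a by omega)]
    obtain ⟨hsum, hlast⟩ := ih (h.mono le_rfl b.le_succ)
    obtain ⟨h1, h2, h12⟩ := h.1 b hab b.lt_succ_self
    rw [sum_Ico_succ_top hab]
    by_cases hb1 : l1 b = 1
    · have hsum0 : ∑ s ∈ Ico a b, (l1 s - l2 s) ≤ 0 := by
        by_contra! hpos
        obtain ⟨t, hat, htb, ht1, hzero⟩ := hlast (by omega)
        obtain ⟨u, htu, hub, hu⟩ := (h.2 t b hat htb b.lt_succ_self).1 ht1 hb1
        have := hzero u htu hub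
        omega
      exact ⟨by omega, fun _ => ⟨b, hab, b.lt_succ_self, hb1, fun u hbu hub => by omega⟩⟩
    · refine ⟨by omega, fun hsum1 => ?_⟩
      obtain ⟨t, hat, htb, ht1, hzero⟩ := hlast (by omega)
      refine ⟨t, hat, by omega, ht1, fun u htu hub => ?_⟩
      rcases Nat.lt_succ_iff_lt_or_eq.1 hub with hu | rfl
      · exact hzero u htu hu
      · omega

theorem abs_sum_sub_le_one (h : IsInterlacingOn l1 l2 a b) :
    |∑ s ∈ Ico a b, (l1 s - l2 s)| ≤ 1 := by
  have hle := h.sum_sub_le_one'.1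
  have hge := h.symm.sum_sub_le_one'.1
  rw [sum_sub_distrib] at hle hge ⊢
  exact abs_le.2 ⟨by linarith, hle⟩

end IsInterlacingOn

theorem hBeta_eq_sum_add_sum_update {n : ℕ} (lam : ℕ → ℤ) {i j : ℕ} (hj : 1 ≤ j)
    (hjn : j ≤ n - 1) :
    hBeta n lam i j =
      ∑ s ∈ Ico i n, lam s + ∑ s ∈ Ico j n, Function.update lam (n - 1) (lam n) s := by
  have hIcc1 : Icc i (n - 1) = Ico i n := by ext; simp only [mem_Icc, mem_Ico]; omega
  have hIcc2 : Icc j (n - 2) = Ico j (n - 1) := by ext; simp only [mem_Icc, mem_Ico]; omega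
  have hupd : ∑ s ∈ Ico j n, Function.update lam (n - 1) (lam n) s
      = ∑ s ∈ Ico j (n - 1), lam s + lam n := by
    obtain ⟨m, rfl⟩ : ∃ m, n = m + 1 := ⟨n - 1, by omega⟩
    rw [sum_Ico_succ_top (by omega), Nat.add_sub_cancel, Function.update_self]
    congr 1
    exact sum_congr rfl fun s hs => Function.update_of_ne (mem_Ico.1 hs).2.ne _ _
  rw [hBeta, hIcc, hIcc, hIcc1, hIcc2, hupd, add_assoc]

theorem hBeta_sub_hBeta_eq {n : ℕ} (l1 l2 : ℕ → ℤ) {i j : ℕ} (hj : 1 ≤ j)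
    (hjn : j ≤ n - 1) :
    hBeta n l1 i j - hBeta n l2 i j = ∑ s ∈ Ico i n, (l1 s - l2 s) +
      ∑ s ∈ Ico j n,
        (Function.update l1 (n - 1) (l1 n) s - Function.update l2 (n - 1) (l2 n) s) := by
  simp only [hBeta_eq_sum_add_sum_update _ hj hjn, sum_sub_distrib]
  ring

theorem eq_of_abs_add_eq_two {a b : ℤ} (ha : |a| ≤ 1) (hb : |b| ≤ 1) (h : |a + b| = 2) :
    b = a ∧ (a = 1 ∨ a = -1) := by
  rw [abs_le] at ha hb
  rcases (abs_eq (by norm_num)).1 h with h | h <;> omega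

/-- The set `R(λ₁,λ₂)`, as pairs `(i, j)` indexing the roots `β_{i,j}`. -/
def rootPairsR (n : ℕ) (l1 l2 : ℕ → ℤ) : Finset (ℕ × ℕ) :=
  (Icc 1 n ×ˢ Icc 1 n).filter fun p =>
    p.1 < p.2 ∧ p.2 ≤ n - 1 ∧ |hBeta n l1 p.1 p.2 - hBeta n l2 p.1 p.2| = 2

theorem mem_rootPairsR {n : ℕ} {l1 l2 : ℕ → ℤ} {i j : ℕ} :
    (i, j) ∈ rootPairsR n l1 l2 ↔
      1 ≤ i ∧ i < j ∧ j ≤ n - 1 ∧ |hBeta n l1 i j - hBeta n l2 i j| = 2 := by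
  simp only [rootPairsR, mem_filter, mem_product, mem_Icc]
  omega

namespace Interlacing

variable {n : ℕ} {l1 l2 : ℕ → ℤ}

theorem symm (h : Interlacing n l1 l2) : Interlacing n l2 l1 :=
  ⟨fun s hs hsn => by obtain ⟨h1, h2, h12⟩ := h.1 s hs hsn; exact ⟨h2, h1, by omega⟩,
    h.2.2.1, h.2.1, fun s t hs hst htn hne => (h.2.2.2 s t hs hst htn hne).symm⟩

theorem isInterlacingOn (h : Interlacing n l1 l2) : IsInterlacingOn l1 l2 1 n :=
  ⟨fun s hs hsn => h.1 s hs hsn.le, fun s t hs hst htn => h.2.2.2 s t hs hst htn.le (by omega)⟩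

theorem exists_between_update (h : Interlacing n l1 l2) {s t : ℕ} (hs : 1 ≤ s) (hst : s < t)
    (htn : t < n) (hs1 : Function.update l1 (n - 1) (l1 n) s = 1)
    (ht1 : Function.update l1 (n - 1) (l1 n) t = 1) :
    ∃ u, s < u ∧ u < t ∧ Function.update l2 (n - 1) (l2 n) u = 1 := by
  rw [Function.update_of_ne (by omega)] at hs1
  by_cases htop : t = n - 1
  · subst htop
    rw [Function.update_self] at ht1
    obtain ⟨u, hsu, hun, hu⟩ := (h.2.2.2 s n hs (by omega) le_rfl (by omega)).1 hs1 ht1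
    have hu' : u ≠ n - 1 := by
      rintro rfl
      have := h.2.1 (by linarith [(h.1 (n - 1) (by omega) (by omega)).1])
      linarith [(h.1 n (by omega) le_rfl).2.1]
    exact ⟨u, hsu, by omega, by rwa [Function.update_of_ne hu']⟩
  · rw [Function.update_of_ne htop] at ht1
    obtain ⟨u, hsu, hut, hu⟩ := (h.2.2.2 s t hs hst htn.le (by omega)).1 hs1 ht1
    exact ⟨u, hsu, hut, by rwa [Function.update_of_ne (by omega)]⟩

/-- Moving the value at `n` to position `n - 1` turns the weights along the chain
`α_1, …, α_{n-2}, α_n` into weights on `1, …, n - 1`. -/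
theorem isInterlacingOn_update (h : Interlacing n l1 l2) :
    IsInterlacingOn (Function.update l1 (n - 1) (l1 n))
      (Function.update l2 (n - 1) (l2 n)) 1 n := by
  refine ⟨fun s hs hsn => ?_, fun s t hs hst htn =>
    ⟨h.exists_between_update hs hst htn, h.symm.exists_between_update hs hst htn⟩⟩
  by_cases htop : s = n - 1
  · subst htop
    simp only [Function.update_self]
    exact h.1 n (by omega) le_rfl
  · simp only [Function.update_of_ne htop]
    exact h.1 s hs hsn.le

theorem sum_Ico_eq_of_mem_rootPairsR (h : Interlacing n l1 l2) {i j : ℕ}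
    (hp : (i, j) ∈ rootPairsR n l1 l2) :
    ∑ s ∈ Ico j n, (Function.update l1 (n - 1) (l1 n) s - Function.update l2 (n - 1) (l2 n) s)
        = ∑ s ∈ Ico i n, (l1 s - l2 s) ∧
      (∑ s ∈ Ico i n, (l1 s - l2 s) = 1 ∨ ∑ s ∈ Ico i n, (l1 s - l2 s) = -1) := by
  obtain ⟨hi, hij, hjn, hD⟩ := mem_rootPairsR.1 hp
  rw [hBeta_sub_hBeta_eq l1 l2 (by omega) hjn] at hD
  exact eq_of_abs_add_eq_two (h.isInterlacingOn.mono hi le_rfl).abs_sum_sub_le_one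
    (h.isInterlacingOn_update.mono (by omega) le_rfl).abs_sum_sub_le_one hD

/-- `R(λ₁,λ₂)` has a single sign: the two sums differ by the segment sum over `[i, i')`. -/
theorem sum_Ico_eq_sum_Ico_of_mem_rootPairsR (h : Interlacing n l1 l2) {i j i' j' : ℕ}
    (hp : (i, j) ∈ rootPairsR n l1 l2) (hq : (i', j') ∈ rootPairsR n l1 l2) (hii' : i ≤ i') :
    ∑ s ∈ Ico i' n, (l1 s - l2 s) = ∑ s ∈ Ico i n, (l1 s - l2 s) := by
  obtain ⟨hi, -, hjn, -⟩ := mem_rootPairsR.1 hp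
  obtain ⟨-, hij', hjn', -⟩ := mem_rootPairsR.1 hq
  have hseg := abs_le.1 (h.isInterlacingOn.mono hi (show i' ≤ n by omega)).abs_sum_sub_le_one
  have hsplit : ∑ s ∈ Ico i i', (l1 s - l2 s) + ∑ s ∈ Ico i' n, (l1 s - l2 s)
      = ∑ s ∈ Ico i n, (l1 s - l2 s) := sum_Ico_consecutive _ hii' (by omega)
  rcases (h.sum_Ico_eq_of_mem_rootPairsR hp).2 with h1 | h1 <;>
    rcases (h.sum_Ico_eq_of_mem_rootPairsR hq).2 with h2 | h2 <;> omega

theorem supClosed_rootPairsR (h : Interlacing n l1 l2) :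
    SupClosed (rootPairsR n l1 l2 : Set (ℕ × ℕ)) := by
  have hsign : ∀ {i j i' j'}, (i, j) ∈ rootPairsR n l1 l2 → (i', j') ∈ rootPairsR n l1 l2 →
      ∑ s ∈ Ico i' n, (l1 s - l2 s) = ∑ s ∈ Ico i n, (l1 s - l2 s) := fun hp hq =>
    (le_total _ _).elim (h.sum_Ico_eq_sum_Ico_of_mem_rootPairsR hp hq)
      fun hle => (h.sum_Ico_eq_sum_Ico_of_mem_rootPairsR hq hp hle).symm
  rintro ⟨i, j⟩ hp ⟨i', j'⟩ hq
  simp only [mem_coe, Prod.mk_sup_mk] at hp hq ⊢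
  obtain ⟨hi, hij, hjn, -⟩ := mem_rootPairsR.1 hp
  obtain ⟨hi', hij', hjn', -⟩ := mem_rootPairsR.1 hq
  obtain ⟨hV, hU⟩ := h.sum_Ico_eq_of_mem_rootPairsR hp
  obtain ⟨hV', -⟩ := h.sum_Ico_eq_of_mem_rootPairsR hq
  have hU' := hsign hp hq
  have hUmax : ∑ s ∈ Ico (i ⊔ i') n, (l1 s - l2 s) = ∑ s ∈ Ico i n, (l1 s - l2 s) := by
    rcases max_choice i i' with hm | hm <;> simp only [hm, hU']
  have hVmax : ∑ s ∈ Ico (j ⊔ j') n,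
      (Function.update l1 (n - 1) (l1 n) s - Function.update l2 (n - 1) (l2 n) s)
        = ∑ s ∈ Ico i n, (l1 s - l2 s) := by
    rcases max_choice j j' with hm | hm <;> simp only [hm, hV, hV', hU']
  refine mem_rootPairsR.2 ⟨by omega, by omega, by omega, ?_⟩
  rw [hBeta_sub_hBeta_eq l1 l2 (by omega) (by omega), hUmax, hVmax]
  rcases hU with h1 | h1 <;> rw [h1] <;> norm_num

end Interlacing

theorem betaCoeff_sub_betaCoeff {n i j i0 j0 : ℕ} (hi : 1 ≤ i) (hij : i < j) (hij0 : i0 < j0)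
    (hj0 : j0 ≤ n - 1) (hii0 : i ≤ i0) (hjj0 : j ≤ j0) (k : ℕ) :
    betaCoeff n i j k - betaCoeff n i0 j0 k =
      alphaCoeff i (i0 - 1) k + alphaCoeff j (j0 - 1) k := by
  unfold betaCoeff alphaCoeff
  split_ifs <;> omega

theorem alphaCoeff_eq_zero_or_isPosRootD {n a b : ℕ} (ha : 1 ≤ a) (hb : b < n) :
    alphaCoeff a b = 0 ∨ IsPosRootD n (alphaCoeff a b) := by
  rcases lt_or_ge b a with hba | hab
  · left
    ext k
    simp only [alphaCoeff, Pi.zero_apply]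
    rw [if_neg (by omega)]
  · right
    left
    refine ⟨a, b, ha, hab, hb.le, fun k => ?_⟩
    simp only [alphaCoeff, alphaACoeff, if_neg hb.ne]

theorem eq_zero_or_isPosRootD_or_add_of_add {n : ℕ} {f g : ℕ → ℤ}
    (hf : f = 0 ∨ IsPosRootD n f) (hg : g = 0 ∨ IsPosRootD n g) :
    (∀ k, f k + g k = 0) ∨ IsPosRootD n (fun k => f k + g k) ∨
      ∃ f1 f2, IsPosRootD n f1 ∧ IsPosRootD n f2 ∧ ∀ k, f k + g k = f1 k + f2 k := by
  rcases hf with rfl | hf <;> rcases hg with rfl | hg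
  · exact Or.inl fun k => by simp
  · exact Or.inr (Or.inl (by simpa using hg))
  · exact Or.inr (Or.inl (by simpa using hf))
  · exact Or.inr (Or.inr ⟨f, g, hf, hg, fun k => rfl⟩)

theorem stmt8_general (n : ℕ) (l1 l2 : ℕ → ℤ) (h : Interlacing n l1 l2)
    (hne : ∃ i j, 1 ≤ i ∧ i < j ∧ j ≤ n - 1 ∧ |hBeta n l1 i j - hBeta n l2 i j| = 2) :
    ∃ i0 j0, (1 ≤ i0 ∧ i0 < j0 ∧ j0 ≤ n - 1 ∧
        |hBeta n l1 i0 j0 - hBeta n l2 i0 j0| = 2) ∧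
      ∀ i j, 1 ≤ i → i < j → j ≤ n - 1 → |hBeta n l1 i j - hBeta n l2 i j| = 2 →
        ((∀ k, betaCoeff n i j k - betaCoeff n i0 j0 k = 0) ∨
          IsPosRootD n (fun k => betaCoeff n i j k - betaCoeff n i0 j0 k) ∨
          ∃ f1 f2, IsPosRootD n f1 ∧ IsPosRootD n f2 ∧
            ∀ k, betaCoeff n i j k - betaCoeff n i0 j0 k = f1 k + f2 k) := by
  have hR : (rootPairsR n l1 l2).Nonempty := by
    obtain ⟨i, j, hij⟩ := hne
    exact ⟨(i, j), mem_rootPairsR.2 hij⟩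
  obtain ⟨⟨i0, j0⟩, hp0, hmax⟩ :
      ∃ p0 ∈ rootPairsR n l1 l2, ∀ p ∈ rootPairsR n l1 l2, p ≤ p0 :=
    ⟨_, h.supClosed_rootPairsR.finsetSup'_mem hR fun p hp => hp, fun p hp => le_sup' id hp⟩
  obtain ⟨hi0, hij0, hj0, hD0⟩ := mem_rootPairsR.1 hp0
  refine ⟨i0, j0, ⟨hi0, hij0, hj0, hD0⟩, fun i j hi hij hj hD => ?_⟩
  obtain ⟨hii0, hjj0⟩ := Prod.mk_le_mk.1 (hmax (i, j) (mem_rootPairsR.2 ⟨hi, hij, hj, hD⟩))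
  simp only [betaCoeff_sub_betaCoeff hi hij hij0 hj0 hii0 hjj0]
  exact eq_zero_or_isPosRootD_or_add_of_add
    (alphaCoeff_eq_zero_or_isPosRootD hi (by omega))
    (alphaCoeff_eq_zero_or_isPosRootD (by omega) (by omega))

/-- If `R(λ₁,λ₂) ≠ ∅` there is `β* ∈ R(λ₁,λ₂)` such that every `β ∈ R(λ₁,λ₂)` satisfies:
`β − β*` is zero, a positive root, or a sum of two positive roots. -/
theorem stmt8 (n : ℕ) (hn : 4 ≤ n) (l1 l2 : ℕ → ℤ) (h : Interlacing n l1 l2)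
    (hne : ∃ i j, 1 ≤ i ∧ i < j ∧ j ≤ n - 1 ∧ |hBeta n l1 i j - hBeta n l2 i j| = 2) :
    ∃ i0 j0, (1 ≤ i0 ∧ i0 < j0 ∧ j0 ≤ n - 1 ∧
        |hBeta n l1 i0 j0 - hBeta n l2 i0 j0| = 2) ∧
      ∀ i j, 1 ≤ i → i < j → j ≤ n - 1 → |hBeta n l1 i j - hBeta n l2 i j| = 2 →
        ((∀ k, betaCoeff n i j k - betaCoeff n i0 j0 k = 0) ∨
          IsPosRootD n (fun k => betaCoeff n i j k - betaCoeff n i0 j0 k) ∨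
          ∃ f1 f2, IsPosRootD n f1 ∧ IsPosRootD n f2 ∧
            ∀ k, betaCoeff n i j k - betaCoeff n i0 j0 k = f1 k + f2 k) :=
  stmt8_general n l1 l2 h hne
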